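/- Suppose centered points v̂(μ) exist for all μ > 0. Let θ ∈ (0, 1/2], ε ∈ (0, q⁻¹(θ)), ζ := q⁻¹(θ) − ε, and let k > 1 and N ∈ ℕ satisfy θ^(2^N) ≤ ε² and (1/2)·log k = q⁻¹(ζ²/m). Define the short-step iteration: μ_{j+1} = μ_j/k and v_{j+1} is obtained from v_j by N full Newton steps v ↦ v + d(v, μ_{j+1}) at parameter μ_{j+1}, starting from v₀ = v̂(μ₀). Then for every j with ‖v_j − v̂(μ_j)‖ ≤ ε, one has h(v̂(μ_{j+1}), v_j) ≤ θ and ‖v_{j+1} − v̂(μ_{j+1})‖ ≤ ε; consequently, for μ_f > 0 and J := ⌈c⁻¹·√m·log(μ₀/μ_f)⌉ with c := 2·q⁻¹(ζ²), the output satisfies μ_J ≤ μ_f and ‖v_J − v̂(μ_J)‖ ≤ ε, after at most N·J total Newton steps. -/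

import Mathlib

open Matrix

/-- Elementwise exponentiation `e^v` of a vector. -/
noncomputable def expV {m : ℕ} (v : Fin m → ℝ) : Fin m → ℝ := fun i => Real.exp (v i)

/-- The log-domain Newton system: `(d, x)` satisfies
`√μ·Aᵀ(eᵛ + eᵛ∘d) = Wx + c` and `√μ·(e^{−v} − e^{−v}∘d) = Ax + b`. -/
noncomputable def IsNewton {m n : ℕ} (A : Matrix (Fin m) (Fin n) ℝ) (b : Fin m → ℝ)
    (c : Fin n → ℝ) (W : Matrix (Fin n) (Fin n) ℝ) (μ : ℝ) (v d : Fin m → ℝ)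
    (x : Fin n → ℝ) : Prop :=
  Real.sqrt μ • (Aᵀ).mulVec (expV v + expV v * d) = W.mulVec x + c ∧
  Real.sqrt μ • (expV (-v) - expV (-v) * d) = A.mulVec x + b

/-- `v` is a centered point for parameter `μ`, witnessed by `x`:
`√μ·Aᵀeᵛ = Wx + c` and `√μ·e^{−v} = Ax + b`. -/
noncomputable def IsCentered {m n : ℕ} (A : Matrix (Fin m) (Fin n) ℝ) (b : Fin m → ℝ)
    (c : Fin n → ℝ) (W : Matrix (Fin n) (Fin n) ℝ) (μ : ℝ) (v : Fin m → ℝ)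
    (x : Fin n → ℝ) : Prop :=
  Real.sqrt μ • (Aᵀ).mulVec (expV v) = W.mulVec x + c ∧
  Real.sqrt μ • expV (-v) = A.mulVec x + b

/-- The divergence `h(u,v) := ⟨eᵘ, e^{−v}⟩ + ⟨e^{−u}, eᵛ⟩ − 2m`. -/
noncomputable def diverg {m : ℕ} (u v : Fin m → ℝ) : ℝ :=
  (∑ i, Real.exp (u i) * Real.exp (-v i)) + (∑ i, Real.exp (-u i) * Real.exp (v i))
    - 2 * m

/-- The Euclidean norm of a vector in `ℝᵐ`. -/
noncomputable def enormV {m : ℕ} (d : Fin m → ℝ) : ℝ := Real.sqrt (∑ i, d i ^ 2)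

/-!
With `q t = 2 (cosh t - 1)` the divergence is `h(u, v) = ∑ᵢ q (uᵢ - vᵢ)`. Convexity of `sinh`
on `[0, ∞)` gives `q (α t) ≤ α² q t` for `|α| ≤ 1`; hence `∑ᵢ q tᵢ ≤ q ‖t‖`, and together
with `t² ≤ q t` this ties `h` to the Euclidean norm.

Positive semidefiniteness of `W` makes the system monotone: `⟨s₁ - s₂, r₁ - r₂⟩ ≥ 0` whenever
`Aᵀ sᵢ = W xᵢ + c` and `rᵢ = A xᵢ + b`. For the centered points at `μ` and `μ / k` this reads
`h(v̂(μ), v̂(μ/k)) ≤ m q(½ log k) = ζ²`, so after `μ` is divided by `k` the old iterate lies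
within `ε + ζ = q⁻¹ θ` of the new center, i.e. `h ≤ θ`. For a Newton step from `v`, with
`δ = v - v̂`, it reads `‖d + sinh δ‖ ≤ ‖cosh δ - 1‖ ≤ h / 2`; since
`|sinh δ - δ| ≤ |δ| (cosh δ - 1)`, the new error `δ + d` has norm at most `7 h / 8`, and
`h⁺ ≤ q (7 h / 8) ≤ h²`. Thus `N` Newton steps bring `θ` down to `θ ^ 2 ^ N ≤ ε²`. The
iteration count follows from `q⁻¹(ζ²) ≤ √m q⁻¹(ζ² / m)`, again by the scaling of `q`.
-/

open Real Finset

/-- The function `q` of the paper. -/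
noncomputable def qcosh (t : ℝ) : ℝ := 2 * (cosh t - 1)

lemma convexOn_sinh_Ici : ConvexOn ℝ (Set.Ici 0) sinh := by
  refine MonotoneOn.convexOn_of_deriv (convex_Ici 0) continuous_sinh.continuousOn
    differentiable_sinh.differentiableOn ?_
  rw [Real.deriv_sinh, interior_Ici]
  intro x hx y hy hxy
  exact cosh_le_cosh.2 (by rwa [abs_of_pos hx, abs_of_pos hy])

lemma sinh_mul_le {α x : ℝ} (hα₀ : 0 ≤ α) (hα₁ : α ≤ 1) (hx : 0 ≤ x) :
    sinh (α * x) ≤ α * sinh x := by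
  simpa using convexOn_sinh_Ici.2 hx (Set.mem_Ici.2 le_rfl) hα₀ (sub_nonneg.2 hα₁)
    (add_sub_cancel α 1)

lemma sinh_le_mul_cosh {x : ℝ} (hx : 0 ≤ x) : sinh x ≤ x * cosh x := by
  rcases hx.eq_or_lt with rfl | hx
  · simp
  have := convexOn_sinh_Ici.slope_le_of_hasDerivAt (Set.mem_Ici.2 le_rfl) hx.le hx
    (hasDerivAt_sinh x)
  rw [slope_def_field, sinh_zero, sub_zero, sub_zero, div_le_iff₀ hx] at this
  linarith

lemma abs_sinh_sub_self_le (t : ℝ) : |sinh t - t| ≤ |t| * (cosh t - 1) := by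
  have key : ∀ x, 0 ≤ x → |sinh x - x| ≤ x * (cosh x - 1) := fun x hx => by
    rw [abs_of_nonneg (sub_nonneg.2 (self_le_sinh_iff.2 hx))]
    linarith [sinh_le_mul_cosh hx]
  rcases le_total 0 t with ht | ht
  · simpa [abs_of_nonneg ht] using key t ht
  · have h := key (-t) (neg_nonneg.2 ht)
    rwa [sinh_neg, cosh_neg, show -sinh t - -t = -(sinh t - t) by ring, abs_neg,
      ← abs_of_nonpos ht] at h

lemma qcosh_eq_four_mul_sinh_sq (t : ℝ) : qcosh t = 4 * sinh (t / 2) ^ 2 := by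
  have := cosh_two_mul (t / 2)
  rw [mul_div_cancel₀ t two_ne_zero, cosh_sq] at this
  rw [qcosh, this]; ring

lemma qcosh_nonneg (t : ℝ) : 0 ≤ qcosh t := by
  rw [qcosh_eq_four_mul_sinh_sq]; positivity

lemma qcosh_abs (t : ℝ) : qcosh |t| = qcosh t := by simp [qcosh, cosh_abs]

lemma qcosh_le_qcosh {a b : ℝ} (ha : 0 ≤ a) (hab : a ≤ b) : qcosh a ≤ qcosh b := by
  have : cosh a ≤ cosh b :=
    cosh_le_cosh.2 (by rwa [abs_of_nonneg ha, abs_of_nonneg (ha.trans hab)])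
  rw [qcosh, qcosh]; linarith

lemma sq_le_qcosh (t : ℝ) : t ^ 2 ≤ qcosh t := by
  have h := self_le_sinh_iff.2 (abs_nonneg (t / 2))
  rw [← abs_sinh] at h
  have := sq_le_sq.2 (by simpa using h)
  rw [qcosh_eq_four_mul_sinh_sq]; nlinarith

lemma qcosh_le_sq_mul_cosh (t : ℝ) : qcosh t ≤ t ^ 2 * cosh t := by
  have h := sinh_le_mul_cosh (abs_nonneg (t / 2))
  rw [← abs_sinh, cosh_abs] at h
  have h2 : sinh (t / 2) ^ 2 ≤ (t / 2) ^ 2 * cosh (t / 2) ^ 2 := by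
    rw [← mul_pow, ← sq_abs, ← sq_abs (t / 2 * _)]
    refine pow_le_pow_left₀ (abs_nonneg _) (h.trans_eq ?_) 2
    rw [abs_mul, abs_of_pos (cosh_pos _)]
  have h3 := cosh_two_mul (t / 2)
  rw [mul_div_cancel₀ t two_ne_zero] at h3
  rw [qcosh_eq_four_mul_sinh_sq]
  nlinarith [sq_nonneg t, sq_nonneg (sinh (t / 2)), cosh_sq (t / 2)]

lemma qcosh_le_of_abs_le_half {t : ℝ} (ht : |t| ≤ 1 / 2) : qcosh t ≤ 8 / 7 * t ^ 2 := by
  have ht2 : t ^ 2 / 2 ≤ 1 / 8 := by nlinarith [sq_abs t, abs_nonneg t]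
  have hexp : exp (t ^ 2 / 2) ≤ 8 / 7 :=
    (exp_bound_div_one_sub_of_interval (by positivity) (by linarith)).trans
      (by rw [div_le_div_iff₀ (by linarith) (by norm_num)]; linarith)
  calc qcosh t ≤ t ^ 2 * cosh t := qcosh_le_sq_mul_cosh t
    _ ≤ t ^ 2 * (8 / 7) := by gcongr; exact (cosh_le_exp_half_sq t).trans hexp
    _ = 8 / 7 * t ^ 2 := mul_comm _ _

lemma qcosh_mul_le {α t : ℝ} (hα : |α| ≤ 1) : qcosh (α * t) ≤ α ^ 2 * qcosh t := by
  rw [← qcosh_abs, abs_mul, ← qcosh_abs t, ← sq_abs α, qcosh_eq_four_mul_sinh_sq,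
    qcosh_eq_four_mul_sinh_sq, mul_div_assoc]
  have h := sinh_mul_le (abs_nonneg α) hα (by positivity : 0 ≤ |t| / 2)
  have h0 : 0 ≤ sinh (|α| * (|t| / 2)) := sinh_nonneg_iff.2 (by positivity)
  nlinarith [pow_le_pow_left₀ h0 h 2]

lemma qcosh_mul_sq_le {a b : ℝ} (h : |a| ≤ |b|) : qcosh a * b ^ 2 ≤ a ^ 2 * qcosh b := by
  rcases eq_or_ne b 0 with rfl | hb
  · rw [abs_zero, abs_nonpos_iff] at h
    simp [h, qcosh]
  have hab : |a / b| ≤ 1 := by rw [abs_div]; exact div_le_one_of_le₀ h (abs_nonneg b)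
  have := qcosh_mul_le (t := b) hab
  rw [div_mul_cancel₀ a hb, div_pow] at this
  calc qcosh a * b ^ 2 ≤ a ^ 2 / b ^ 2 * qcosh b * b ^ 2 := by gcongr
    _ = a ^ 2 * qcosh b := by field_simp

lemma sum_qcosh_le_qcosh_sqrt {ι : Type*} (s : Finset ι) (t : ι → ℝ) :
    ∑ i ∈ s, qcosh (t i) ≤ qcosh √(∑ i ∈ s, t i ^ 2) := by
  set r := √(∑ i ∈ s, t i ^ 2)
  have hr0 : 0 ≤ r := sqrt_nonneg _
  have hle : ∀ i ∈ s, |t i| ≤ |r| := fun i hi => by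
    rw [abs_of_nonneg hr0, ← sqrt_sq_eq_abs]
    exact sqrt_le_sqrt (single_le_sum (fun j _ => sq_nonneg (t j)) hi)
  rcases hr0.eq_or_lt with hr | hr
  · refine (sum_nonpos fun i hi => ?_).trans (qcosh_nonneg r)
    have := hle i hi
    rw [← hr, abs_zero, abs_nonpos_iff] at this
    simp [this, qcosh]
  · have h := sum_le_sum fun i hi => qcosh_mul_sq_le (hle i hi)
    rw [← sum_mul, ← sum_mul, ← sq_sqrt (sum_nonneg fun i _ => sq_nonneg (t i)),
      mul_comm (r ^ 2)] at h
    exact le_of_mul_le_mul_right h (by positivity)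

lemma le_sqrt_mul_of_qcosh_eq {a b r : ℝ} (hr : 1 ≤ r) (ha : 0 ≤ a) (hb : 0 ≤ b)
    (hqa : 0 < qcosh a) (h : qcosh a = r * qcosh b) : a ≤ √r * b := by
  rcases le_total a b with hab | hba
  · exact hab.trans (le_mul_of_one_le_left hb (one_le_sqrt.2 hr))
  have hqb : 0 < qcosh b := pos_of_mul_pos_right (h ▸ hqa) (by linarith)
  have := qcosh_mul_sq_le (a := b) (b := a) (by rwa [abs_of_nonneg ha, abs_of_nonneg hb])
  rw [h] at this
  have hsq : a ^ 2 ≤ (√r * b) ^ 2 := by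
    rw [mul_pow, sq_sqrt (by linarith)]
    exact le_of_mul_le_mul_left (by linarith) hqb
  exact (pow_le_pow_iff_left₀ ha (by positivity) two_ne_zero).1 hsq

section EuclideanNorm

variable {m : ℕ}

lemma enormV_eq_norm (d : Fin m → ℝ) :
    enormV d = ‖(WithLp.toLp 2 d : EuclideanSpace ℝ (Fin m))‖ := by
  simp [enormV, EuclideanSpace.norm_eq]

lemma enormV_nonneg (d : Fin m → ℝ) : 0 ≤ enormV d := sqrt_nonneg _

lemma enormV_add_le (u v : Fin m → ℝ) : enormV (u + v) ≤ enormV u + enormV v := by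
  simp only [enormV_eq_norm, WithLp.toLp_add]
  exact norm_add_le _ _

lemma enormV_sub_le_add (u v w : Fin m → ℝ) :
    enormV (u - w) ≤ enormV (u - v) + enormV (v - w) := by
  simpa using enormV_add_le (u - v) (v - w)

lemma enormV_le_of_sum_sq_le {d : Fin m → ℝ} {r : ℝ} (hr : 0 ≤ r)
    (h : ∑ i, d i ^ 2 ≤ r ^ 2) : enormV d ≤ r :=
  (sqrt_le_sqrt h).trans_eq (sqrt_sq hr)

lemma diverg_eq_sum_qcosh (u v : Fin m → ℝ) : diverg u v = ∑ i, qcosh (u i - v i) := by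
  simp only [diverg, qcosh, cosh_eq, ← exp_add, ← sum_add_distrib, mul_sub, mul_one,
    sum_sub_distrib]
  simp [sum_const, card_univ, ← sub_eq_add_neg, mul_div_cancel₀, add_comm]
  ring

lemma diverg_comm (u v : Fin m → ℝ) : diverg u v = diverg v u := by
  unfold diverg
  rw [add_comm]
  simp_rw [mul_comm (exp (-u _)), mul_comm (exp (-v _))]

lemma diverg_nonneg (u v : Fin m → ℝ) : 0 ≤ diverg u v := by
  rw [diverg_eq_sum_qcosh]; exact sum_nonneg fun i _ => qcosh_nonneg _

lemma diverg_le_qcosh_enormV_sub (u v : Fin m → ℝ) : diverg u v ≤ qcosh (enormV (u - v)) :=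
  (diverg_eq_sum_qcosh u v).trans_le (sum_qcosh_le_qcosh_sqrt univ (u - v))

lemma enormV_sub_le_of_diverg_le {u v : Fin m → ℝ} {r : ℝ} (hr : 0 ≤ r)
    (h : diverg u v ≤ r ^ 2) : enormV (u - v) ≤ r := by
  refine enormV_le_of_sum_sq_le hr (le_trans ?_ ((diverg_eq_sum_qcosh u v).symm.trans_le h))
  exact sum_le_sum fun i _ => sq_le_qcosh _

end EuclideanNorm

lemma sum_qcosh_add_le_sq {m : ℕ} {δ d : Fin m → ℝ}
    (hd : ∑ i, (d i + sinh (δ i)) ^ 2 ≤ ∑ i, (cosh (δ i) - 1) ^ 2)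
    (hδ : ∑ i, qcosh (δ i) ≤ 1 / 2) :
    ∑ i, qcosh (δ i + d i) ≤ (∑ i, qcosh (δ i)) ^ 2 := by
  set h := ∑ i, qcosh (δ i)
  have hh : 0 ≤ h := sum_nonneg fun i _ => qcosh_nonneg _
  have hcosh : ∑ i, (cosh (δ i) - 1) ^ 2 ≤ (h / 2) ^ 2 := by
    have hsum : ∑ i, (cosh (δ i) - 1) = h / 2 := by
      rw [sum_div]; exact sum_congr rfl fun i _ => by rw [qcosh]; ring
    rw [← hsum]
    exact sum_sq_le_sq_sum_of_nonneg fun i _ => sub_nonneg.2 (one_le_cosh _)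
  have hsinh : ∀ i, (δ i - sinh (δ i)) ^ 2 ≤ (3 / 4) ^ 2 * (cosh (δ i) - 1) ^ 2 := fun i => by
    have hδi : δ i ^ 2 ≤ 1 / 2 := (sq_le_qcosh _).trans
      ((single_le_sum (fun j _ => qcosh_nonneg (δ j)) (mem_univ i)).trans hδ)
    rw [← sq_abs, abs_sub_comm, ← mul_pow]
    refine pow_le_pow_left₀ (abs_nonneg _) ((abs_sinh_sub_self_le _).trans ?_) 2
    gcongr
    · exact sub_nonneg.2 (one_le_cosh _)
    · nlinarith [sq_abs (δ i), abs_nonneg (δ i)]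
  have he : enormV (fun i => d i + sinh (δ i)) ≤ h / 2 :=
    enormV_le_of_sum_sq_le (by positivity) (hd.trans hcosh)
  have hg : enormV (fun i => δ i - sinh (δ i)) ≤ 3 / 4 * (h / 2) := by
    refine enormV_le_of_sum_sq_le (by positivity) ((sum_le_sum fun i _ => hsinh i).trans ?_)
    rw [← mul_sum, mul_pow]
    gcongr
  have hnorm : enormV (δ + d) ≤ 7 / 8 * h := by
    have hsplit : δ + d = (fun i => d i + sinh (δ i)) + fun i => δ i - sinh (δ i) := by
      ext i; simp only [Pi.add_apply]; ring
    rw [hsplit]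
    linarith [enormV_add_le (fun i => d i + sinh (δ i)) fun i => δ i - sinh (δ i)]
  calc ∑ i, qcosh (δ i + d i) ≤ qcosh (enormV (δ + d)) :=
        sum_qcosh_le_qcosh_sqrt univ (δ + d)
    _ ≤ qcosh (7 / 8 * h) := qcosh_le_qcosh (enormV_nonneg _) hnorm
    _ ≤ 8 / 7 * (7 / 8 * h) ^ 2 :=
        qcosh_le_of_abs_le_half (by rw [abs_of_nonneg (by positivity)]; linarith)
    _ ≤ h ^ 2 := by nlinarith

lemma le_pow_two_pow_of_le_sq {a : ℕ → ℝ} {θ : ℝ} {N : ℕ} (ha : ∀ i, 0 ≤ a i)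
    (hθ : θ ≤ 1) (h0 : a 0 ≤ θ) (hstep : ∀ i < N, a i ≤ θ → a (i + 1) ≤ a i ^ 2) :
    a N ≤ θ ^ 2 ^ N := by
  have hθ0 : 0 ≤ θ := (ha 0).trans h0
  suffices ∀ i ≤ N, a i ≤ θ ^ 2 ^ i from this N le_rfl
  intro i
  induction i with
  | zero => simpa using h0
  | succ i ih =>
    intro hi
    have hai := ih (by omega)
    calc a (i + 1) ≤ a i ^ 2 :=
          hstep i (by omega) (hai.trans (pow_le_of_le_one hθ0 hθ (by positivity)))
      _ ≤ (θ ^ 2 ^ i) ^ 2 := pow_le_pow_left₀ (ha i) hai 2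
      _ = θ ^ 2 ^ (i + 1) := by rw [← pow_mul, pow_succ]

lemma sub_dotProduct_sub_nonneg_of_posSemidef {ι κ : Type*} [Fintype ι] [Fintype κ]
    {A : Matrix ι κ ℝ} {W : Matrix κ κ ℝ} (hW : W.PosSemidef) {b s₁ s₂ r₁ r₂ : ι → ℝ}
    {c x₁ x₂ : κ → ℝ} (hs₁ : Aᵀ *ᵥ s₁ = W *ᵥ x₁ + c) (hr₁ : r₁ = A *ᵥ x₁ + b)
    (hs₂ : Aᵀ *ᵥ s₂ = W *ᵥ x₂ + c) (hr₂ : r₂ = A *ᵥ x₂ + b) :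
    0 ≤ (s₁ - s₂) ⬝ᵥ (r₁ - r₂) := by
  have hr : r₁ - r₂ = A *ᵥ (x₁ - x₂) := by rw [hr₁, hr₂, mulVec_sub]; abel
  have hs : Aᵀ *ᵥ (s₁ - s₂) = W *ᵥ (x₁ - x₂) := by
    rw [mulVec_sub, hs₁, hs₂, mulVec_sub]; abel
  rw [hr, dotProduct_mulVec, ← mulVec_transpose, hs, dotProduct_comm]
  exact hW.dotProduct_mulVec_nonneg _

lemma exp_residual_mul_eq (a b u v : ℝ) :
    (exp a * exp u - exp b * exp v) * (exp a * exp (-u) - exp b * exp (-v)) =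
      exp (a + b) * (qcosh (a - b) - qcosh (u - v)) := by
  simp only [qcosh, cosh_eq, exp_add, exp_sub, exp_neg]
  field_simp
  ring

lemma newton_residual_mul_eq (s v w d : ℝ) :
    (s * (exp v + exp v * d) - s * exp w) * (s * (exp (-v) - exp (-v) * d) - s * exp (-w)) =
      s ^ 2 * ((cosh (v - w) - 1) ^ 2 - (d + sinh (v - w)) ^ 2) := by
  simp only [cosh_eq, sinh_eq, exp_sub, exp_neg]
  field_simp
  ring

section CentralPath

variable {m n : ℕ} {A : Matrix (Fin m) (Fin n) ℝ} {b : Fin m → ℝ} {c : Fin n → ℝ}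
  {W : Matrix (Fin n) (Fin n) ℝ}

lemma IsCentered.diverg_le (hW : W.PosSemidef) {μ₁ μ₂ : ℝ} {v₁ v₂ : Fin m → ℝ}
    {x₁ x₂ : Fin n → ℝ} (hμ₁ : 0 < μ₁) (hμ₂ : 0 < μ₂)
    (h₁ : IsCentered A b c W μ₁ v₁ x₁) (h₂ : IsCentered A b c W μ₂ v₂ x₂) :
    diverg v₁ v₂ ≤ m * qcosh (log (μ₁ / μ₂) / 2) := by
  have key := sub_dotProduct_sub_nonneg_of_posSemidef hW
    ((mulVec_smul _ _ _).trans h₁.1) h₁.2 ((mulVec_smul _ _ _).trans h₂.1) h₂.2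
  have hsqrt : ∀ μ : ℝ, 0 < μ → √μ = exp (log μ / 2) := fun μ hμ => by
    rw [exp_half, exp_log hμ]
  simp only [dotProduct, Pi.sub_apply, Pi.smul_apply, smul_eq_mul, expV, Pi.neg_apply,
    hsqrt μ₁ hμ₁, hsqrt μ₂ hμ₂, exp_residual_mul_eq, ← mul_sum,
    sum_sub_distrib, sum_const, card_univ, Fintype.card_fin, nsmul_eq_mul] at key
  rw [diverg_eq_sum_qcosh, log_div hμ₁.ne' hμ₂.ne', sub_div]
  exact sub_nonneg.1 ((mul_nonneg_iff_of_pos_left (exp_pos _)).1 key)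

lemma IsNewton.sum_sq_add_sinh_le (hW : W.PosSemidef) {μ : ℝ} {vh v d : Fin m → ℝ}
    {xh x : Fin n → ℝ} (hμ : 0 < μ) (hc : IsCentered A b c W μ vh xh)
    (hN : IsNewton A b c W μ v d x) :
    ∑ i, (d i + sinh (v i - vh i)) ^ 2 ≤ ∑ i, (cosh (v i - vh i) - 1) ^ 2 := by
  have key := sub_dotProduct_sub_nonneg_of_posSemidef hW
    ((mulVec_smul _ _ _).trans hN.1) hN.2 ((mulVec_smul _ _ _).trans hc.1) hc.2
  simp only [dotProduct, Pi.sub_apply, Pi.add_apply, Pi.mul_apply, Pi.smul_apply, smul_eq_mul,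
    expV, Pi.neg_apply, newton_residual_mul_eq, sq_sqrt hμ.le,
    ← mul_sum, sum_sub_distrib] at key
  exact sub_nonneg.1 ((mul_nonneg_iff_of_pos_left hμ).1 key)

lemma IsNewton.diverg_add_le_sq (hW : W.PosSemidef) {μ : ℝ} {vh v d : Fin m → ℝ}
    {xh x : Fin n → ℝ} (hμ : 0 < μ) (hc : IsCentered A b c W μ vh xh)
    (hN : IsNewton A b c W μ v d x) (hv : diverg v vh ≤ 1 / 2) :
    diverg (v + d) vh ≤ diverg v vh ^ 2 := by
  simp only [diverg_eq_sum_qcosh] at hv ⊢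
  simpa only [Pi.add_apply, add_sub_right_comm] using
    sum_qcosh_add_le_sq (hN.sum_sq_add_sinh_le hW hμ hc) hv

lemma diverg_newton_iterate_le (hW : W.PosSemidef) {μ θ : ℝ} {vh : Fin m → ℝ}
    {xh : Fin n → ℝ} (hμ : 0 < μ) (hc : IsCentered A b c W μ vh xh) {w : ℕ → Fin m → ℝ} {N : ℕ}
    (hw : ∀ i < N, ∃ d x, IsNewton A b c W μ (w i) d x ∧ w (i + 1) = w i + d)
    (hθ : θ ≤ 1 / 2) (h0 : diverg (w 0) vh ≤ θ) : diverg (w N) vh ≤ θ ^ 2 ^ N := by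
  refine le_pow_two_pow_of_le_sq (fun i => diverg_nonneg _ _) (by linarith) h0
    fun i hi hiθ => ?_
  obtain ⟨d, x, hN, hnext⟩ := hw i hi
  rw [hnext]
  exact hN.diverg_add_le_sq hW hμ hc (hiθ.trans hθ)

lemma IsCentered.diverg_le_qcosh_add (hW : W.PosSemidef) {μ k ε ζ : ℝ}
    {v v₁ v₂ : Fin m → ℝ} {x₁ x₂ : Fin n → ℝ} (hμ : 0 < μ) (hk : 0 < k)
    (h₁ : IsCentered A b c W μ v₁ x₁) (h₂ : IsCentered A b c W (μ / k) v₂ x₂)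
    (hζ : 0 ≤ ζ) (hkζ : m * qcosh (log k / 2) ≤ ζ ^ 2) (hv : enormV (v - v₁) ≤ ε) :
    diverg v₂ v ≤ qcosh (ε + ζ) := by
  have hdrift : enormV (v₁ - v₂) ≤ ζ := by
    refine enormV_sub_le_of_diverg_le hζ ((h₁.diverg_le hW hμ (div_pos hμ hk) h₂).trans ?_)
    rwa [div_div_cancel₀ hμ.ne']
  have htri := (enormV_sub_le_add v v₁ v₂).trans (add_le_add hv hdrift)
  rw [diverg_comm]
  exact (diverg_le_qcosh_enormV_sub v v₂).trans (qcosh_le_qcosh (enormV_nonneg _) htri)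

end CentralPath

lemma le_natCeil_mul_of_le_mul {a c ℓ : ℝ} (L : ℝ) (hc : 0 < c) (ha : 0 ≤ a)
    (h : c ≤ a * ℓ) : L ≤ ⌈c⁻¹ * a * L⌉₊ * ℓ := by
  have hℓ : 0 ≤ ℓ := by
    by_contra! hneg
    nlinarith [mul_nonpos_of_nonneg_of_nonpos ha hneg.le]
  rcases le_or_gt L 0 with hL | hL
  · exact hL.trans (by positivity)
  calc L = L * 1 := (mul_one L).symm
    _ ≤ L * (c⁻¹ * (a * ℓ)) := by
        gcongr
        rwa [le_inv_mul_iff₀ hc, mul_one]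
    _ = c⁻¹ * a * L * ℓ := by ring
    _ ≤ ⌈c⁻¹ * a * L⌉₊ * ℓ := by gcongr; exact Nat.le_ceil _

lemma div_pow_le_of_log_div_le {μ₀ μf k : ℝ} {J : ℕ} (hμ₀ : 0 < μ₀) (hμf : 0 < μf)
    (hk : 0 < k) (h : log (μ₀ / μf) ≤ J * log k) : μ₀ / k ^ J ≤ μf := by
  rw [← log_pow, log_le_log_iff (by positivity) (by positivity), div_le_iff₀ hμf] at h
  rwa [div_le_iff₀ (by positivity), mul_comm]

lemma div_pow_natCeil_le {m : ℕ} (hm : 0 < m) {μ₀ μf k ζ a : ℝ} (hμ₀ : 0 < μ₀) (hμf : 0 < μf)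
    (hk : 1 < k) (hζ : ζ ≠ 0) (ha : 0 ≤ a) (hqa : qcosh a = ζ ^ 2)
    (hqk : m * qcosh (log k / 2) = ζ ^ 2) :
    μ₀ / k ^ ⌈(2 * a)⁻¹ * √m * log (μ₀ / μf)⌉₊ ≤ μf := by
  have hqa0 : 0 < qcosh a := hqa ▸ by positivity
  have ha0 : 0 < a := ha.lt_of_ne (by rintro rfl; simp [qcosh] at hqa0)
  have hlogk : 2 * a ≤ √m * log k := by
    have := le_sqrt_mul_of_qcosh_eq (Nat.one_le_cast.2 hm) ha (half_pos (log_pos hk)).le hqa0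
      (hqa.trans hqk.symm)
    linarith
  exact div_pow_le_of_log_div_le hμ₀ hμf (one_pos.trans hk)
    (le_natCeil_mul_of_le_mul _ (by positivity) (sqrt_nonneg _) hlogk)

theorem stmt_14_general {m n : ℕ} (hm : 0 < m)
    (A : Matrix (Fin m) (Fin n) ℝ) (b : Fin m → ℝ) (c : Fin n → ℝ)
    (W : Matrix (Fin n) (Fin n) ℝ) (hW : W.PosSemidef)
    (vhat : ℝ → Fin m → ℝ) (xhat : ℝ → Fin n → ℝ)
    (hcent : ∀ μ : ℝ, 0 < μ → IsCentered A b c W μ (vhat μ) (xhat μ))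
    (qinv : ℝ → ℝ)
    (hqinv_nonneg : ∀ s, 0 ≤ s → 0 ≤ qinv s)
    (hqinv : ∀ s, 0 ≤ s → 2 * (Real.cosh (qinv s) - 1) = s)
    (θ ε ζ : ℝ) (hθ : 0 < θ) (hθ' : θ ≤ 1 / 2)
    (hε : 0 < ε) (hε' : ε < qinv θ) (hζ : ζ = qinv θ - ε)
    (k : ℝ) (hk : 1 < k) (N : ℕ)
    (hN : θ ^ (2 ^ N) ≤ ε ^ 2)
    (hk2 : (1 / 2) * Real.log k = qinv (ζ ^ 2 / m))
    (μ₀ : ℝ) (hμ₀ : 0 < μ₀)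
    (μseq : ℕ → ℝ) (hμinit : μseq 0 = μ₀) (hμrec : ∀ j, μseq (j + 1) = μseq j / k)
    (vseq : ℕ → Fin m → ℝ) (hvinit : vseq 0 = vhat μ₀)
    (w : ℕ → ℕ → Fin m → ℝ)
    (hw0 : ∀ j, w j 0 = vseq j)
    (hwstep : ∀ j, ∀ i < N, ∃ d x, IsNewton A b c W (μseq (j + 1)) (w j i) d x ∧
      w j (i + 1) = w j i + d)
    (hvnext : ∀ j, vseq (j + 1) = w j N) :
    (∀ j, enormV (vseq j - vhat (μseq j)) ≤ ε →
      diverg (vhat (μseq (j + 1))) (vseq j) ≤ θ ∧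
      enormV (vseq (j + 1) - vhat (μseq (j + 1))) ≤ ε) ∧
    ∀ μf : ℝ, 0 < μf →
      ∀ J : ℕ, J = ⌈(2 * qinv (ζ ^ 2))⁻¹ * Real.sqrt m * Real.log (μ₀ / μf)⌉₊ →
        μseq J ≤ μf ∧ enormV (vseq J - vhat (μseq J)) ≤ ε := by
  have hq : ∀ s, 0 ≤ s → qcosh (qinv s) = s := hqinv
  have hk0 : 0 < k := one_pos.trans hk
  have hμseq : ∀ j, μseq j = μ₀ / k ^ j := fun j => by
    induction j with
    | zero => simp [hμinit]
    | succ j ih => rw [hμrec, ih, pow_succ, div_div]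
  have hμpos : ∀ j, 0 < μseq j := fun j => hμseq j ▸ by positivity
  have hζ0 : 0 < ζ := by linarith
  have hmζ : m * qcosh (log k / 2) = ζ ^ 2 := by
    rw [div_eq_inv_mul, ← one_div, hk2, hq _ (by positivity), mul_div_cancel₀ _ (by positivity)]
  have hstep : ∀ j, enormV (vseq j - vhat (μseq j)) ≤ ε →
      diverg (vhat (μseq (j + 1))) (vseq j) ≤ θ ∧
      enormV (vseq (j + 1) - vhat (μseq (j + 1))) ≤ ε := fun j hj => by
    have hcent' := hcent _ (hμpos (j + 1))
    have hdiv : diverg (vhat (μseq (j + 1))) (vseq j) ≤ θ := by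
      rw [hμrec] at hcent' ⊢
      have := (hcent _ (hμpos j)).diverg_le_qcosh_add hW (hμpos j) hk0 hcent' hζ0.le hmζ.le hj
      rwa [hζ, add_sub_cancel, hq θ hθ.le] at this
    refine ⟨hdiv, hvnext j ▸ enormV_sub_le_of_diverg_le hε.le (le_trans ?_ hN)⟩
    exact diverg_newton_iterate_le hW (hμpos (j + 1)) (hcent _ (hμpos (j + 1))) (hwstep j) hθ'
      (by rwa [hw0, diverg_comm])
  have hinv : ∀ j, enormV (vseq j - vhat (μseq j)) ≤ ε := fun j => by
    induction j with
    | zero => simpa [hvinit, hμinit, enormV] using hε.le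
    | succ j ih => exact (hstep j ih).2
  refine ⟨hstep, fun μf hμf J hJ => ⟨?_, hinv J⟩⟩
  rw [hμseq, hJ]
  exact div_pow_natCeil_le hm hμ₀ hμf hk hζ0.ne' (hqinv_nonneg _ (sq_nonneg ζ))
    (hq _ (sq_nonneg ζ)) hmζ

/-- correctness of the short-step algorithm. Centered points `v̂(μ)`
exist for all `μ > 0`; `q(t) = 2(cosh t − 1)` and `qinv` is its nonnegative inverse;
`θ ∈ (0,1/2]`, `ε ∈ (0, q⁻¹(θ))`, `ζ = q⁻¹(θ) − ε`, `k > 1` and `N` satisfy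
`θ^(2^N) ≤ ε²` and `(1/2)·log k = q⁻¹(ζ²/m)`. The short-step iteration sets
`μ_{j+1} = μ_j/k` and obtains `v_{j+1}` from `v_j` by `N` full Newton steps at
parameter `μ_{j+1}`, starting from `v₀ = v̂(μ₀)`. Then whenever
`‖v_j − v̂(μ_j)‖ ≤ ε` one has `h(v̂(μ_{j+1}), v_j) ≤ θ` and
`‖v_{j+1} − v̂(μ_{j+1})‖ ≤ ε`; consequently for every `μ_f > 0`, with
`J = ⌈c⁻¹·√m·log(μ₀/μ_f)⌉` and `c = 2·q⁻¹(ζ²)`, the output (after at most `N·J`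
Newton steps) satisfies `μ_J ≤ μ_f` and `‖v_J − v̂(μ_J)‖ ≤ ε`. -/
theorem stmt_14 {m n : ℕ} (hm : 0 < m)
    (A : Matrix (Fin m) (Fin n) ℝ) (b : Fin m → ℝ) (c : Fin n → ℝ)
    (W : Matrix (Fin n) (Fin n) ℝ) (hW : W.PosSemidef) (hAW : (Aᵀ * A + W).PosDef)
    (vhat : ℝ → Fin m → ℝ) (xhat : ℝ → Fin n → ℝ)
    (hcent : ∀ μ : ℝ, 0 < μ → IsCentered A b c W μ (vhat μ) (xhat μ))
    (qinv : ℝ → ℝ)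
    (hqinv_nonneg : ∀ s, 0 ≤ s → 0 ≤ qinv s)
    (hqinv : ∀ s, 0 ≤ s → 2 * (Real.cosh (qinv s) - 1) = s)
    (θ ε ζ : ℝ) (hθ : 0 < θ) (hθ' : θ ≤ 1 / 2)
    (hε : 0 < ε) (hε' : ε < qinv θ) (hζ : ζ = qinv θ - ε)
    (k : ℝ) (hk : 1 < k) (N : ℕ)
    (hN : θ ^ (2 ^ N) ≤ ε ^ 2)
    (hk2 : (1 / 2) * Real.log k = qinv (ζ ^ 2 / m))
    (μ₀ : ℝ) (hμ₀ : 0 < μ₀)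
    (μseq : ℕ → ℝ) (hμinit : μseq 0 = μ₀) (hμrec : ∀ j, μseq (j + 1) = μseq j / k)
    (vseq : ℕ → Fin m → ℝ) (hvinit : vseq 0 = vhat μ₀)
    (w : ℕ → ℕ → Fin m → ℝ)
    (hw0 : ∀ j, w j 0 = vseq j)
    (hwstep : ∀ j, ∀ i < N, ∃ d x, IsNewton A b c W (μseq (j + 1)) (w j i) d x ∧
      w j (i + 1) = w j i + d)
    (hvnext : ∀ j, vseq (j + 1) = w j N) :
    (∀ j, enormV (vseq j - vhat (μseq j)) ≤ ε →
      diverg (vhat (μseq (j + 1))) (vseq j) ≤ θ ∧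
      enormV (vseq (j + 1) - vhat (μseq (j + 1))) ≤ ε) ∧
    ∀ μf : ℝ, 0 < μf →
      ∀ J : ℕ, J = ⌈(2 * qinv (ζ ^ 2))⁻¹ * Real.sqrt m * Real.log (μ₀ / μf)⌉₊ →
        μseq J ≤ μf ∧ enormV (vseq J - vhat (μseq J)) ≤ ε :=
  stmt_14_general hm A b c W hW vhat xhat hcent qinv hqinv_nonneg hqinv θ ε ζ hθ hθ' hε hε' hζ k hk
    N hN hk2 μ₀ hμ₀ μseq hμinit hμrec vseq hvinit w hw0 hwstep hvnext
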